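/- Let η be a composition of size n and γ ∈ ℤ^n with Σγ_i = 0. Then K_{Φ(η)}(γ | q) ≠ 0 if and only if γ ∈ Y_η, that is, for each 0 ≤ k ≤ p−1 and every subset Ω of the (k+1)-st block {r_k+1, …, r_k+η_{k+1}}, one has Σ_{j=1}^{r_k} γ_j + Σ_{a∈Ω} γ_a ≥ 0 (with r_k = η_1+⋯+η_k, r_0 = 0). -/

import Mathlib

open scoped Classical

noncomputable section

/-- Partial sum `S η r = η_1 + ⋯ + η_r`. -/
def S (η : List ℕ) (r : ℕ) : ℕ := (η.take r).sum

/-- The set `Φ(η)` of pairs (0-indexed) `(i,j)` with `i < S η r ≤ j` for some `1 ≤ r ≤ l(η)`. -/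
def Phi (η : List ℕ) : Finset (ℕ × ℕ) :=
  (Finset.range η.sum ×ˢ Finset.range η.sum).filter
    (fun p => ∃ r ∈ Finset.Icc 1 η.length, p.1 < S η r ∧ S η r ≤ p.2)

/-- Coefficient of `q^d` in the parabolic `q`-Kostant partition function `K_{Φ(η)}(γ|q)`:
the number of non-negative integer arrays supported on `Φ(η)` with net row sums `γ`
and total sum of entries `d`. -/
def KCoeff (η : List ℕ) (γ : ℕ → ℤ) (d : ℕ) : ℕ :=
  Nat.card {m : ℕ × ℕ → ℕ //
    (∀ p, p ∉ Phi η → m p = 0) ∧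
    (∀ i ∈ Finset.range η.sum,
      (∑ j ∈ Finset.range η.sum, (m (i, j) : ℤ)) -
        (∑ j ∈ Finset.range η.sum, (m (j, i) : ℤ)) = γ i) ∧
    (∑ p ∈ Phi η, m p) = d}

/-- The parabolic Kostant partition function `K_{Φ(η)}(γ)` (value at `q = 1`). -/
def KNum (η : List ℕ) (γ : ℕ → ℤ) : ℕ :=
  Nat.card {m : ℕ × ℕ → ℕ //
    (∀ p, p ∉ Phi η → m p = 0) ∧
    (∀ i ∈ Finset.range η.sum,
      (∑ j ∈ Finset.range η.sum, (m (i, j) : ℤ)) -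
        (∑ j ∈ Finset.range η.sum, (m (j, i) : ℤ)) = γ i)}

/-- Coefficient of `q^d` in the parabolic Kostka polynomial
`K_{λμη}(q) = Σ_w (−1)^{ℓ(w)} K_{Φ(η)}(w(λ+δ) − μ − δ | q)`, where `δ = (n−1,…,1,0)`. -/
def ParKostkaCoeff (η : List ℕ) (lam mu : ℕ → ℤ) (d : ℕ) : ℤ :=
  ∑ w : Equiv.Perm (Fin η.sum),
    (Equiv.Perm.sign w : ℤ) *
      (KCoeff η
        (fun i =>
          (if h : i < η.sum then
              lam ((w⁻¹ ⟨i, h⟩ : Fin η.sum) : ℕ) +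
                ((η.sum : ℤ) - 1 - ((w⁻¹ ⟨i, h⟩ : Fin η.sum) : ℕ))
            else 0) - mu i - ((η.sum : ℤ) - 1 - i)) d : ℤ)

/-- The parabolic Kostka number `K_{λμη}(1)`. -/
def ParKostkaNum (η : List ℕ) (lam mu : ℕ → ℤ) : ℤ :=
  ∑ w : Equiv.Perm (Fin η.sum),
    (Equiv.Perm.sign w : ℤ) *
      (KNum η
        (fun i =>
          (if h : i < η.sum then
              lam ((w⁻¹ ⟨i, h⟩ : Fin η.sum) : ℕ) +
                ((η.sum : ℤ) - 1 - ((w⁻¹ ⟨i, h⟩ : Fin η.sum) : ℕ))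
            else 0) - mu i - ((η.sum : ℤ) - 1 - i)) : ℤ)

end

/-!
Some coefficient of `K_{Φ(η)}(γ|q)` is nonzero iff there is a nonnegative integer flow `m` on
`Φ(η)` with net outflow `γ`, because flows of a fixed total weight are finitely many.

Each set `range (S η k) ∪ Ω` with `Ω` inside block `k` contains every `Φ(η)`-predecessor of its
elements, so `Σ γ` over it is the total flow leaving it, hence nonnegative.

Conversely let `γ ∈ Y_η`, `γ ≠ 0`, let `j` be the last position with `γ j ≠ 0` and `i` the last
one with `γ i > 0`. The inequalities of `Y_η` for the block of `j` force `γ ≤ 0` on that block,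
so `i` lies in an earlier block and `(i, j) ∈ Φ(η)`. Moving one unit from `i` to `j` stays in `Y_η`
and decreases `Σ |γ|`, so induction produces the flow.
-/

open Finset

lemma S_mono (η : List ℕ) : Monotone (S η) := fun _ _ hab =>
  (List.take_sublist_take_left hab).sum_le_sum fun _ _ => Nat.zero_le _

lemma S_le_sum (η : List ℕ) (k : ℕ) : S η k ≤ η.sum :=
  (List.take_sublist k η).sum_le_sum fun _ _ => Nat.zero_le _

lemma exists_S_le_lt_S_succ (η : List ℕ) {t : ℕ} (ht : t < η.sum) :
    ∃ k < η.length, S η k ≤ t ∧ t < S η (k + 1) := by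
  have hex : ∃ k, t < S η k := ⟨η.length, by simpa [S] using ht⟩
  have hpos : Nat.find hex ≠ 0 := by simp [S]
  have hlen : Nat.find hex ≤ η.length := Nat.find_min' hex (by simpa [S] using ht)
  refine ⟨Nat.find hex - 1, by omega, ?_, ?_⟩
  · exact not_lt.mp (Nat.find_min hex (by omega))
  · simpa [Nat.sub_add_cancel (Nat.one_le_iff_ne_zero.mpr hpos)] using Nat.find_spec hex

lemma mem_Phi {η : List ℕ} {i j : ℕ} :
    (i, j) ∈ Phi η ↔ i < η.sum ∧ j < η.sum ∧
      ∃ r ∈ Icc 1 η.length, i < S η r ∧ S η r ≤ j := by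
  simp [Phi, and_assoc]

lemma lt_S_of_mem_Phi {η : List ℕ} {i j k : ℕ} (hij : (i, j) ∈ Phi η)
    (hj : j < S η (k + 1)) : i < S η k := by
  obtain ⟨-, -, r, -, hir, hrj⟩ := mem_Phi.mp hij
  have hrk : r ≤ k := Nat.lt_succ_iff.mp ((S_mono η).reflect_lt (hrj.trans_lt hj))
  exact hir.trans_le (S_mono η hrk)

def netFlow (n : ℕ) (m : ℕ × ℕ → ℕ) (i : ℕ) : ℤ :=
  ∑ j ∈ range n, (m (i, j) : ℤ) - ∑ j ∈ range n, (m (j, i) : ℤ)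

def IsFlow (η : List ℕ) (γ : ℕ → ℤ) (m : ℕ × ℕ → ℕ) : Prop :=
  (∀ p, p ∉ Phi η → m p = 0) ∧ ∀ i ∈ range η.sum, netFlow η.sum m i = γ i

def InY (η : List ℕ) (γ : ℕ → ℤ) : Prop :=
  ∀ k < η.length, ∀ Ω ⊆ Ico (S η k) (S η (k + 1)),
    0 ≤ (∑ j ∈ range (S η k), γ j) + ∑ a ∈ Ω, γ a

lemma sum_netFlow_eq {n : ℕ} {A : Finset ℕ} (hA : A ⊆ range n) (m : ℕ × ℕ → ℕ) :
    ∑ i ∈ A, netFlow n m i =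
      ∑ i ∈ A, ∑ j ∈ range n \ A, (m (i, j) : ℤ) - ∑ i ∈ A, ∑ j ∈ range n \ A, (m (j, i) : ℤ) := by
  have hsplit : ∀ g : ℕ → ℤ, ∑ j ∈ range n, g j = ∑ j ∈ A, g j + ∑ j ∈ range n \ A, g j :=
    fun g => by rw [add_comm, sum_sdiff hA]
  simp only [netFlow, sum_sub_distrib, hsplit, sum_add_distrib]
  rw [sum_comm (s := A) (t := A) (f := fun i j => (m (j, i) : ℤ))]
  ring

lemma sum_netFlow_nonneg {n : ℕ} {A : Finset ℕ} (hA : A ⊆ range n) {m : ℕ × ℕ → ℕ}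
    (hin : ∀ i ∈ A, ∀ j ∈ range n \ A, m (j, i) = 0) : 0 ≤ ∑ i ∈ A, netFlow n m i := by
  have hzero : ∑ i ∈ A, ∑ j ∈ range n \ A, (m (j, i) : ℤ) = 0 :=
    sum_eq_zero fun i hi => sum_eq_zero fun j hj => by simp [hin i hi j hj]
  rw [sum_netFlow_eq hA, hzero, sub_zero]
  exact sum_nonneg fun _ _ => sum_nonneg fun _ _ => Int.natCast_nonneg _

lemma IsFlow.inY {η : List ℕ} {γ : ℕ → ℤ} {m : ℕ × ℕ → ℕ} (hm : IsFlow η γ m) : InY η γ := by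
  intro k hk Ω hΩ
  have hΩk : ∀ a ∈ Ω, S η k ≤ a ∧ a < S η (k + 1) := fun a ha => mem_Ico.mp (hΩ ha)
  have hdisj : Disjoint (range (S η k)) Ω :=
    disjoint_left.mpr fun a ha haΩ => by have := hΩk a haΩ; rw [mem_range] at ha; omega
  have hk1 : S η (k + 1) ≤ η.sum := S_le_sum η (k + 1)
  have hmono : S η k ≤ S η (k + 1) := S_mono η k.le_succ
  have hA : range (S η k) ∪ Ω ⊆ range η.sum := union_subset
    (range_subset_range.mpr (hmono.trans hk1)) fun a ha => by have := hΩk a ha; rw [mem_range]; omega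
  have hin : ∀ i ∈ range (S η k) ∪ Ω, ∀ j ∈ range η.sum \ (range (S η k) ∪ Ω), m (j, i) = 0 := by
    intro i hi j hj
    by_contra hne
    have hi' : i < S η (k + 1) := by
      rcases mem_union.mp hi with h | h
      · rw [mem_range] at h; omega
      · exact (hΩk i h).2
    have hjk := lt_S_of_mem_Phi (not_not.mp (mt (hm.1 _) hne)) hi'
    exact (mem_sdiff.mp hj).2 (mem_union_left _ (mem_range.mpr hjk))
  rw [← sum_union hdisj, ← sum_congr rfl fun i hi => hm.2 i (hA hi)]
  exact sum_netFlow_nonneg hA hin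

lemma InY.nonpos_of_sum_range_eq_zero {η : List ℕ} {γ : ℕ → ℤ} (hY : InY η γ) {c : ℕ}
    (hc : c < η.length) (hsum : ∑ t ∈ range (S η (c + 1)), γ t = 0) {t : ℕ}
    (ht : t ∈ Ico (S η c) (S η (c + 1))) : γ t ≤ 0 := by
  have h := hY c hc _ (erase_subset t _)
  have hsplit := sum_range_add_sum_Ico γ (S_mono η c.le_succ)
  have herase := add_sum_erase _ γ ht
  linarith

lemma InY.exists_transfer_pair {η : List ℕ} {γ : ℕ → ℤ} (hY : InY η γ)
    (h0 : ∑ t ∈ range η.sum, γ t = 0) (hne : ∃ t ∈ range η.sum, γ t ≠ 0) :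
    ∃ i j, (i, j) ∈ Phi η ∧ 0 < γ i ∧ γ j < 0 ∧ ∀ t, i < t → t < η.sum → γ t ≤ 0 := by
  obtain ⟨j, hj, hjmax⟩ :=
    exists_max_image ((range η.sum).filter (γ · ≠ 0)) id (filter_nonempty_iff.mpr hne)
  simp only [mem_filter, mem_range, id] at hj hjmax
  obtain ⟨c, hc, hcj, hjc⟩ := exists_S_le_lt_S_succ η hj.1
  have hvanish : ∀ t, j < t → t < η.sum → γ t = 0 := fun t hjt ht =>
    by_contra fun h => absurd (hjmax t ⟨ht, h⟩) (by omega)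
  have htop : ∑ t ∈ range (S η (c + 1)), γ t = 0 := by
    rw [← h0]
    refine sum_subset (range_subset_range.mpr (S_le_sum η _)) fun t ht ht' => ?_
    simp only [mem_range, not_lt] at ht ht'
    exact hvanish t (by omega) ht
  have hnonpos : ∀ t, S η c ≤ t → t < η.sum → γ t ≤ 0 := by
    intro t hct ht
    by_cases htc : t < S η (c + 1)
    · exact hY.nonpos_of_sum_range_eq_zero hc htop (mem_Ico.mpr ⟨hct, htc⟩)
    · exact (hvanish t (by omega) ht).le
  have hjneg : γ j < 0 := lt_of_le_of_ne (hnonpos j hcj hj.1) hj.2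
  obtain ⟨i, hi, himax⟩ := exists_max_image ((range η.sum).filter (0 < γ ·)) id
    (filter_nonempty_iff.mpr
      (exists_pos_of_sum_zero_of_exists_nonzero γ h0 ⟨j, mem_range.mpr hj.1, hj.2⟩))
  simp only [mem_filter, mem_range, id] at hi himax
  have hic : i < S η c := by
    by_contra h
    have := hnonpos i (by omega) hi.1
    omega
  have hc1 : 1 ≤ c := by
    by_contra h
    simp [show c = 0 by omega, S] at hic
  refine ⟨i, j, mem_Phi.mpr ⟨hi.1, hj.1, c, mem_Icc.mpr ⟨hc1, hc.le⟩, hic, hcj⟩, hi.2, hjneg,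
    fun t hit ht => ?_⟩
  by_contra h
  have := himax t ⟨ht, by omega⟩
  omega

section Transfer

def transfer (γ : ℕ → ℤ) (i j : ℕ) : ℕ → ℤ := γ - Pi.single i 1 + Pi.single j 1

variable {γ : ℕ → ℤ} {i j : ℕ}

lemma sum_transfer (s : Finset ℕ) :
    ∑ t ∈ s, transfer γ i j t =
      ∑ t ∈ s, γ t - (if i ∈ s then 1 else 0) + (if j ∈ s then 1 else 0) := by
  simp [transfer, sum_add_distrib, sum_sub_distrib, sum_pi_single']

lemma sum_natAbs_transfer_lt {s : Finset ℕ} (hi : i ∈ s) (hγi : 0 < γ i)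
    (hγj : γ j < 0) :
    ∑ t ∈ s, (transfer γ i j t).natAbs < ∑ t ∈ s, (γ t).natAbs := by
  have hij : i ≠ j := by rintro rfl; omega
  refine sum_lt_sum (fun t _ => ?_) ⟨i, hi, ?_⟩ <;>
    simp only [transfer, Pi.add_apply, Pi.sub_apply, Pi.single_apply] <;>
    split_ifs <;> (try subst_vars) <;> omega

lemma InY.transfer {η : List ℕ} (hY : InY η γ) (h0 : ∑ t ∈ range η.sum, γ t = 0)
    (hγi : 0 < γ i) (hj : j < η.sum) (hγj : γ j < 0)
    (hmax : ∀ t, i < t → t < η.sum → γ t ≤ 0) :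
    InY η (transfer γ i j) := by
  intro k hk Ω hΩ
  have hY' := hY k hk Ω hΩ
  rw [sum_transfer, sum_transfer]
  by_cases hiΩ : i ∈ Ω
  · have herase := add_sum_erase Ω γ hiΩ
    have := hY k hk _ ((erase_subset i Ω).trans hΩ)
    have : i ∉ range (S η k) := by simpa using (mem_Ico.mp (hΩ hiΩ)).1
    split_ifs <;> omega
  by_cases hiS : i ∈ range (S η k)
  swap
  · split_ifs <;> omega
  by_cases hjA : j ∈ range (S η k) ∨ j ∈ Ω
  · rcases hjA with hjA | hjA <;> split_ifs <;> omega
  -- Every position after `i` carries `γ ≤ 0`, so the sum over the cut is at least `-γ j ≥ 1`.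
  rw [not_or] at hjA
  have hSk : S η k ≤ η.sum := (S_mono η k.le_succ).trans (S_le_sum η _)
  have hjI : j ∈ (Ico (S η k) η.sum) := by simpa [mem_Ico, hj] using hjA.1
  have hΩI : Ω ⊆ (Ico (S η k) η.sum).erase j := fun a ha =>
    mem_erase.mpr ⟨fun h => hjA.2 (h ▸ ha), Ico_subset_Ico_right (S_le_sum η _) (hΩ ha)⟩
  have hrest : ∑ t ∈ (Ico (S η k) η.sum).erase j \ Ω, γ t ≤ 0 := sum_nonpos fun t ht => by
    simp only [mem_sdiff, mem_erase, mem_Ico] at ht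
    exact hmax t (by rw [mem_range] at hiS; omega) ht.1.2.2
  have hsplit := sum_range_add_sum_Ico γ hSk
  have herase := add_sum_erase _ γ hjI
  have hsdiff := sum_sdiff hΩI (f := γ)
  split_ifs <;> omega

end Transfer

lemma netFlow_add_single {n : ℕ} (m : ℕ × ℕ → ℕ) {i j : ℕ} (hi : i < n) (hj : j < n) (t : ℕ) :
    netFlow n (m + Pi.single (i, j) 1) t =
      netFlow n m t + (if t = i then 1 else 0) - (if t = j then 1 else 0) := by
  have hrow : ∑ x ∈ range n, ((Pi.single (i, j) 1 : ℕ × ℕ → ℕ) (t, x) : ℤ) =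
      if t = i then 1 else 0 := by
    by_cases hti : t = i <;> simp [Pi.single_apply, hti, hj]
  have hcol : ∑ x ∈ range n, ((Pi.single (i, j) 1 : ℕ × ℕ → ℕ) (x, t) : ℤ) =
      if t = j then 1 else 0 := by
    by_cases htj : t = j <;> simp [Pi.single_apply, htj, hi]
  simp only [netFlow, Pi.add_apply, Nat.cast_add, sum_add_distrib, hrow, hcol]
  ring

lemma IsFlow.add_single {η : List ℕ} {γ : ℕ → ℤ} {m : ℕ × ℕ → ℕ} {i j : ℕ}
    (hij : (i, j) ∈ Phi η) (hm : IsFlow η (transfer γ i j) m) :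
    IsFlow η γ (m + Pi.single (i, j) 1) := by
  obtain ⟨hi, hj, -⟩ := mem_Phi.mp hij
  refine ⟨fun p hp => ?_, fun t ht => ?_⟩
  · simp [hm.1 p hp, show p ≠ (i, j) from fun h => hp (h ▸ hij)]
  · rw [netFlow_add_single m hi hj, hm.2 t ht]
    simp only [transfer, Pi.add_apply, Pi.sub_apply, Pi.single_apply]
    ring

theorem exists_isFlow_of_inY {η : List ℕ} {γ : ℕ → ℤ} (h0 : ∑ t ∈ range η.sum, γ t = 0)
    (hY : InY η γ) : ∃ m, IsFlow η γ m := by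
  induction hN : ∑ t ∈ range η.sum, (γ t).natAbs using Nat.strong_induction_on
    generalizing γ with
  | _ N ih =>
  by_cases hne : ∃ t ∈ range η.sum, γ t ≠ 0
  · obtain ⟨i, j, hij, hγi, hγj, hmax⟩ := hY.exists_transfer_pair h0 hne
    obtain ⟨hi, hj, -⟩ := mem_Phi.mp hij
    obtain ⟨m, hm⟩ := ih _ (hN ▸ sum_natAbs_transfer_lt (mem_range.mpr hi) hγi hγj)
      (by simp [sum_transfer, h0, hi, hj])
      (hY.transfer h0 hγi hj hγj hmax) rfl
    exact ⟨_, hm.add_single hij⟩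
  · push Not at hne
    exact ⟨0, fun _ _ => rfl, fun t ht => by simp [netFlow, hne t ht]⟩

lemma finite_setOf_sum_eq {α : Type*} (s : Finset α) (d : ℕ) :
    {m : α → ℕ | (∀ p, p ∉ s → m p = 0) ∧ ∑ p ∈ s, m p = d}.Finite := by
  refine Set.finite_coe_iff.mp (Finite.of_injective
    (fun m (p : s) => (⟨m.1 p, Nat.lt_succ_of_le ?_⟩ : Fin (d + 1))) fun m m' h => ?_)
  · exact (single_le_sum (f := m.1) (fun _ _ => Nat.zero_le _) p.2).trans_eq m.2.2
  · ext p
    by_cases hp : p ∈ s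
    · exact congrArg Fin.val (congrFun h ⟨p, hp⟩)
    · rw [m.2.1 p hp, m'.2.1 p hp]

lemma exists_KCoeff_ne_zero_iff {η : List ℕ} {γ : ℕ → ℤ} :
    (∃ d, KCoeff η γ d ≠ 0) ↔ ∃ m, IsFlow η γ m := by
  simp only [KCoeff, Nat.card_ne_zero]
  constructor
  · rintro ⟨d, ⟨⟨m, hm0, hflow, -⟩⟩, -⟩
    exact ⟨m, hm0, hflow⟩
  · rintro ⟨m, hm0, hflow⟩
    exact ⟨_, ⟨⟨m, hm0, hflow, rfl⟩⟩,
      ((finite_setOf_sum_eq (Phi η) _).subset fun m' hm' => ⟨hm'.1, hm'.2.2⟩).to_subtype⟩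

/-- Non-vanishing theorem: `K_{Φ(η)}(γ|q) ≠ 0` if and only if `γ ∈ Y_η`,
i.e. for each `0 ≤ k ≤ p−1` and every subset `Ω` of the `(k+1)`-st block,
`Σ_{j ≤ r_k} γ_j + Σ_{a∈Ω} γ_a ≥ 0`. -/
theorem stmt9 (η : List ℕ) (γ : ℕ → ℤ)
    (h0 : ∑ i ∈ Finset.range η.sum, γ i = 0) :
    (∃ d, KCoeff η γ d ≠ 0) ↔
      ∀ k < η.length, ∀ Ω ⊆ Finset.Ico (S η k) (S η (k + 1)),
        0 ≤ (∑ j ∈ Finset.range (S η k), γ j) + ∑ a ∈ Ω, γ a := by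
  rw [exists_KCoeff_ne_zero_iff]
  exact ⟨fun ⟨_, hm⟩ => hm.inY, exists_isFlow_of_inY h0⟩
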